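/- Let X and Y be Tychonoff (completely regular Hausdorff) spaces, E and F nontrivial real normed vector spaces, and T : C*(X,E) → C*(Y,F) a biseparating map. Then for every y ∈ Y there exists a unique support point of y in StoneCech X, i.e. a unique point x ∈ StoneCech X such that for every open neighborhood U of x in StoneCech X there exists f ∈ C*(X,E) with cozero set c(f) ⊆ ι_X⁻¹(U) and (Tf)(y) ≠ 0. -/

import Mathlib

open scoped BoundedContinuousFunction
open Set

/-! A partition of unity on the compact space `StoneCech X` subordinate to a finite open cover
splits every `f ∈ C*(X,E)` into finitely many pieces whose cozero sets lie in the pulled-back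
cover members. If `y` had no support point, every point of `StoneCech X` would have a
neighbourhood on which all `f` with cozero set inside it satisfy `(Tf)(y) = 0`; by additivity
then `(Tf)(y) = 0` for all `f`, contradicting surjectivity of `T`. Two distinct support points
have disjoint neighbourhoods, and functions supported in them witness that `T` is not
separating. -/

/-- `x ∈ StoneCech X` is a support point of `y ∈ Y` (relative to a map
`T : C*(X,E) → C*(Y,F)`) if for every open neighborhood `U` of `x` in `StoneCech X` there is
`f ∈ C*(X,E)` with cozero set contained in `ι_X⁻¹(U)` and `(Tf)(y) ≠ 0`. -/
def IsSupportPoint {X Y E F : Type*} [TopologicalSpace X] [TopologicalSpace Y]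
    [NormedAddCommGroup E] [NormedAddCommGroup F]
    (T : (X →ᵇ E) → (Y →ᵇ F)) (y : Y) (x : StoneCech X) : Prop :=
  ∀ U : Set (StoneCech X), IsOpen U → x ∈ U →
    ∃ f : X →ᵇ E, {x' : X | f x' ≠ 0} ⊆ stoneCechUnit ⁻¹' U ∧ T f y ≠ 0

namespace BoundedContinuousFunction

theorem exists_sum_eq_of_iUnion_eq_univ {X K E ι : Type*} [TopologicalSpace X]
    [TopologicalSpace K] [CompactSpace K] [T2Space K] [NormedAddCommGroup E] [NormedSpace ℝ E]
    (e : C(X, K)) (U : ι → Set K) (hUo : ∀ i, IsOpen (U i)) (hU : ⋃ i, U i = univ)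
    (f : X →ᵇ E) :
    ∃ (t : Finset ι) (g : t → X →ᵇ E),
      (∀ i, {x | g i x ≠ 0} ⊆ e ⁻¹' U i) ∧ ∑ i, g i = f := by
  obtain ⟨t, ht⟩ := isCompact_univ.elim_finite_subcover U hUo hU.superset
  obtain ⟨ρ, hρ⟩ := PartitionOfUnity.exists_isSubordinate isClosed_univ (fun i : t => U i)
    (fun i => hUo i) (by simpa [iUnion_subtype] using ht)
  refine ⟨t, fun i => (mkOfCompact (ρ i)).compContinuous e • f,
    fun i x hx => hρ i (subset_tsupport _ (left_ne_zero_of_smul hx)), ?_⟩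
  ext x
  have hρ1 : ∑ i, ρ i (e x) = 1 := by
    simpa [finsum_eq_sum_of_fintype] using ρ.sum_eq_one (mem_univ (e x))
  calc (∑ i, (mkOfCompact (ρ i)).compContinuous e • f) x
      = (∑ i, ρ i (e x)) • f x := by
        rw [coe_sum, Finset.sum_apply, Finset.sum_smul]; rfl
    _ = f x := by rw [hρ1, one_smul]

end BoundedContinuousFunction

section SupportPoint

variable {X Y E F : Type*} [TopologicalSpace X] [TopologicalSpace Y]
  [NormedAddCommGroup E] [NormedAddCommGroup F] {T : (X →ᵇ E) → (Y →ᵇ F)}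

theorem exists_isSupportPoint [NormedSpace ℝ E] [Nontrivial F] (hsurj : Function.Surjective T)
    (hadd : ∀ f g : X →ᵇ E, T (f + g) = T f + T g) (y : Y) :
    ∃ x : StoneCech X, IsSupportPoint T y x := by
  by_contra! h
  simp only [IsSupportPoint] at h
  push Not at h
  choose U hUo hxU hU using h
  obtain ⟨v, hv⟩ := exists_ne (0 : F)
  obtain ⟨f, hf⟩ := hsurj (BoundedContinuousFunction.const Y v)
  obtain ⟨t, g, hg, rfl⟩ := BoundedContinuousFunction.exists_sum_eq_of_iUnion_eq_univ
    ⟨stoneCechUnit, continuous_stoneCechUnit⟩ U hUo (iUnion_eq_univ_iff.2 fun x => ⟨x, hxU x⟩) f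
  have hTy : T (∑ i, g i) y = 0 := by
    rw [show T (∑ i, g i) = ∑ i, T (g i) from map_sum (AddMonoidHom.mk' T hadd) g _,
      BoundedContinuousFunction.coe_sum, Finset.sum_apply]
    exact Finset.sum_eq_zero fun i _ => hU _ _ (hg i)
  exact hv (by rwa [hf, BoundedContinuousFunction.const_apply] at hTy)

theorem IsSupportPoint.eq
    (hsep : ∀ f g : X →ᵇ E, (∀ x, ‖f x‖ * ‖g x‖ = 0) → ∀ y, ‖T f y‖ * ‖T g y‖ = 0)
    {y : Y} {x x' : StoneCech X} (hx : IsSupportPoint T y x) (hx' : IsSupportPoint T y x') :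
    x = x' := by
  by_contra hne
  obtain ⟨V, W, hVo, hWo, hxV, hx'W, hVW⟩ := t2_separation hne
  obtain ⟨f, hfV, hfy⟩ := hx V hVo hxV
  obtain ⟨g, hgW, hgy⟩ := hx' W hWo hx'W
  have hfg : ∀ z, ‖f z‖ * ‖g z‖ = 0 := by
    intro z
    by_contra h
    obtain ⟨hfz, hgz⟩ := mul_ne_zero_iff.1 h
    exact hVW.ne_of_mem (hfV (norm_ne_zero_iff.1 hfz)) (hgW (norm_ne_zero_iff.1 hgz)) rfl
  rcases mul_eq_zero.1 (hsep f g hfg y) with h | h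
  · exact hfy (norm_eq_zero.1 h)
  · exact hgy (norm_eq_zero.1 h)

end SupportPoint

theorem stmt_11_general {X Y E F : Type*}
    [TopologicalSpace X] [TopologicalSpace Y]
    [NormedAddCommGroup E] [NormedSpace ℝ E]
    [NormedAddCommGroup F] [Nontrivial F]
    (T : (X →ᵇ E) → (Y →ᵇ F))
    (hbij : Function.Bijective T)
    (hadd : ∀ f g : X →ᵇ E, T (f + g) = T f + T g)
    (hsep : ∀ f g : X →ᵇ E, (∀ x, ‖f x‖ * ‖g x‖ = 0) → ∀ y, ‖T f y‖ * ‖T g y‖ = 0) :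
    ∀ y : Y, ∃! x : StoneCech X, IsSupportPoint T y x := by
  intro y
  obtain ⟨x, hx⟩ := exists_isSupportPoint hbij.surjective hadd y
  exact ⟨x, hx, fun x' hx' => hx'.eq hsep hx⟩

/-- For a biseparating `T : C*(X,E) → C*(Y,F)` and every `y ∈ Y`, there exists
a unique support point of `y` in `StoneCech X`. -/
theorem stmt_11 {X Y E F : Type*}
    [TopologicalSpace X] [T35Space X] [TopologicalSpace Y] [T35Space Y]
    [NormedAddCommGroup E] [NormedSpace ℝ E] [Nontrivial E]
    [NormedAddCommGroup F] [NormedSpace ℝ F] [Nontrivial F]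
    (T : (X →ᵇ E) → (Y →ᵇ F))
    (hbij : Function.Bijective T)
    (hadd : ∀ f g : X →ᵇ E, T (f + g) = T f + T g)
    (hsep : ∀ f g : X →ᵇ E, (∀ x, ‖f x‖ * ‖g x‖ = 0) → ∀ y, ‖T f y‖ * ‖T g y‖ = 0)
    (hsep' : ∀ f g : X →ᵇ E, (∀ y, ‖T f y‖ * ‖T g y‖ = 0) → ∀ x, ‖f x‖ * ‖g x‖ = 0) :
    ∀ y : Y, ∃! x : StoneCech X, IsSupportPoint T y x :=
  stmt_11_general T hbij hadd hsep
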